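/- In the ε-perturbed model M⁺ of any episodic learning process, every policy π induces an ergodic Markov chain, and hence has a limiting distribution lim_{t→∞} ρ_π^{+(t)} = ρ⁺_π. -/

import Mathlib

open scoped ENNReal Classical
open Filter Topology

noncomputable section

def chainOf {σ A : Type} (P : σ → A → σ → ℝ≥0∞) (π : σ → A → ℝ≥0∞) (s s' : σ) : ℝ≥0∞ :=
  ∑' a, π s a * P s a s'

def stepProb {σ : Type} (M : σ → σ → ℝ≥0∞) : ℕ → σ → σ → ℝ≥0∞
  | 0, s, s' => if s = s' then 1 else 0
  | t + 1, s, s' => ∑' u, stepProb M t s u * M u s'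

def epiStep {σ : Type} (M : σ → σ → ℝ≥0∞) (T : Set σ) (s : σ) : ℕ → σ → ℝ≥0∞
  | 0, u => M s u
  | t + 1, u => ∑' v, if v ∈ T then 0 else epiStep M T s t v * M v u

def termHit {σ : Type} (M : σ → σ → ℝ≥0∞) (T : Set σ) (s : σ) (t : ℕ) : ℝ≥0∞ :=
  ∑' u, if u ∈ T then epiStep M T s t u else 0

def meanEpiLen {σ : Type} (M : σ → σ → ℝ≥0∞) (T : Set σ) (s : σ) : ℝ≥0∞ :=
  ∑' t : ℕ, ((t : ℝ≥0∞) + 1) * termHit M T s t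

def TermSet {S A : Type} (P : S → A → S → ℝ≥0∞) (ρ0 : S → ℝ≥0∞) : Set S :=
  {s | ∀ s₀, 0 < ρ0 s₀ → ∀ a a', P s a = P s₀ a'}

def ReachSet {σ : Type} (M : σ → σ → ℝ≥0∞) (ρ0 : σ → ℝ≥0∞) : Set σ :=
  {s | ∃ t : ℕ, 0 < ∑' s₀, ρ0 s₀ * stepProb M t s₀ s}

structure ELP (S A : Type) where
  P : S → A → S → ℝ≥0∞
  R : S → ℝ
  ρ0 : S → ℝ≥0∞
  P_sum : ∀ s a, ∑' s', P s a s' = 1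
  ρ0_sum : ∑' s, ρ0 s = 1
  homog : ∀ s s', 0 < ρ0 s → 0 < ρ0 s' → ∀ a a', P s a = P s' a'
  epi_fin : ∀ π : S → A → ℝ≥0∞, (∀ s, ∑' a, π s a = 1) → ∀ s ∈ TermSet P ρ0,
      (∑' t, termHit (chainOf P π) (TermSet P ρ0) s t) = 1 ∧
      meanEpiLen (chainOf P π) (TermSet P ρ0) s < ⊤

/-- The ε-perturbed Markov chain: a null state is inserted, entered from a terminal
state with probability ε; from the null state transitions mimic a terminal state. -/
def perturbM {S : Type} (M : S → S → ℝ≥0∞) (T : Set S) (sT : S) (ε : ℝ≥0∞) :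
    Option S → Option S → ℝ≥0∞
  | some s, some s' => if s ∈ T then (1 - ε) * M s s' else M s s'
  | some s, none => if s ∈ T then ε else 0
  | none, some s' => M sT s'
  | none, none => 0

/-!
The null state `none` is an atom of the perturbed chain: it is entered only from terminal states,
and the chain leaves it exactly as a fresh episode from `sT`. Cutting paths at their last visit to
`none` writes every marginal in terms of `u n = P(Xₙ = none)`, and `u` solves the renewal equation
driven by the return-time distribution `f` of `none`. A return consists of a geometric number of
episodes (mean `1/ε`), each of finite mean length, so the mean return time `m` is finite; a single
episode of a length `t + 1` that has positive probability already makes returns at the coprime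
times `t + 2` and `2t + 3` possible. The renewal theorem of Erdős–Feller–Pollard then gives
`u n → 1/m`, and the marginals converge to the excursion measure of `none` divided by `m`, which
is stationary.

For the renewal theorem we follow Feller: along a subsequence on which `u` tends to `limsup u`,
the shifted sequences converge to an `f`-harmonic profile bounded by its value at `0`, hence
constant on the additive monoid generated by the support of `f`, which contains all large
integers; the mass identity `H n + ∑ r k * u (n - k) = 1` with `∑ r = m` then forces
`limsup u * m = 1`. The same argument applies to `liminf u`.
-/

open Finset

theorem tendsto_sum_range_mul_sub {g u v : ℕ → ℝ} {a : ℕ → ℕ} {C : ℝ}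
    (hg : Summable g) (hu : ∀ n, |u n| ≤ C) (ha : Tendsto a atTop atTop)
    (huv : ∀ k, Tendsto (fun j => u (a j - k)) atTop (𝓝 (v k))) :
    Tendsto (fun j => ∑ k ∈ range (a j + 1), g k * u (a j - k)) atTop
      (𝓝 (∑' k, g k * v k)) := by
  have hC : 0 ≤ C := (abs_nonneg _).trans (hu 0)
  have hsum : ∀ n, ∑ k ∈ range (n + 1), g k * u (n - k)
      = ∑' k, if k ≤ n then g k * u (n - k) else 0 := fun n => by
    rw [tsum_eq_sum (s := range (n + 1)) fun k hk => if_neg (by simpa [Nat.lt_succ_iff] using hk)]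
    exact sum_congr rfl fun k hk => (if_pos (Nat.lt_succ_iff.mp (mem_range.mp hk))).symm
  simp_rw [hsum]
  refine tendsto_tsum_of_dominated_convergence ((summable_abs_iff.mpr hg).mul_right C)
    (fun k => ?_) (Eventually.of_forall fun j k => ?_)
  · refine ((huv k).const_mul (g k)).congr' ?_
    filter_upwards [ha.eventually_ge_atTop k] with j hj
    rw [if_pos hj]
  · split_ifs
    · rw [norm_mul, Real.norm_eq_abs, Real.norm_eq_abs]
      exact mul_le_mul_of_nonneg_left (hu _) (abs_nonneg _)
    · simpa using mul_nonneg (abs_nonneg (g k)) hC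

theorem exists_tendsto_shift {u : ℕ → ℝ} (hu : ∀ n, u n ∈ Set.Icc (0 : ℝ) 1) {a : ℕ → ℕ}
    {c : ℝ} (ha : Tendsto a atTop atTop) (hc : Tendsto (u ∘ a) atTop (𝓝 c)) :
    ∃ a' : ℕ → ℕ, Tendsto a' atTop atTop ∧ ∃ v : ℕ → ℝ, v 0 = c ∧
      ∀ i, Tendsto (fun j => u (a' j - i)) atTop (𝓝 (v i)) := by
  obtain ⟨v, -, φ, hφ, hv⟩ := (isCompact_univ_pi fun _ : ℕ => isCompact_Icc).tendsto_subseq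
    (x := fun j i => u (a j - i)) fun j => Set.mem_univ_pi.mpr fun i => hu _
  have hvi : ∀ i, Tendsto (fun j => u (a (φ j) - i)) atTop (𝓝 (v i)) :=
    fun i => tendsto_pi_nhds.mp hv i
  refine ⟨a ∘ φ, ha.comp hφ.tendsto_atTop, v, tendsto_nhds_unique (hvi 0) ?_, hvi⟩
  exact hc.comp hφ.tendsto_atTop

theorem harmonic_eq_zero_of_mem_closure {f w : ℕ → ℝ} (hf : ∀ k, 0 ≤ f k)
    (hw : ∀ i, 0 ≤ w i) (hsum : ∀ i, Summable fun k => f k * w (i + k))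
    (hharm : ∀ i, w i = ∑' k, f k * w (i + k))
    {i j : ℕ} (hi : i ∈ AddSubmonoid.closure {k | 0 < f k}) (hj : w j = 0) : w (j + i) = 0 := by
  induction hi using AddSubmonoid.closure_induction generalizing j with
  | mem d hd =>
    have h := (hasSum_zero_iff_of_nonneg fun k => mul_nonneg (hf k) (hw _)).mp
      (hj ▸ hharm j ▸ (hsum j).hasSum)
    exact (mul_eq_zero.mp (congrFun h d)).resolve_left (ne_of_gt hd)
  | zero => simpa using hj
  | add x y _ _ hx hy => rw [← add_assoc]; exact hy (hx hj)

theorem mul_add_mem_closure_pair {p q : ℕ} (hpq : p.Coprime q) (hp : 1 < p) (hq : 1 < q)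
    (k : ℕ) : p * q + k ∈ AddSubmonoid.closure {p, q} := by
  by_contra h
  have := (frobeniusNumber_pair hpq hp hq).2 h
  have : 0 < p * q := by positivity
  omega

section Renewal

variable {f b u H r : ℕ → ℝ} {m : ℝ}

theorem shift_limit_eq_tsum (hf : Summable f) (hu : ∀ n, u n ∈ Set.Icc (0 : ℝ) 1)
    (hb : Tendsto b atTop (𝓝 0)) (hrec : ∀ n, u n = b n + ∑ k ∈ range (n + 1), f k * u (n - k))
    {a : ℕ → ℕ} {v : ℕ → ℝ} (ha : Tendsto a atTop atTop)
    (hv : ∀ i, Tendsto (fun j => u (a j - i)) atTop (𝓝 (v i))) (i : ℕ) :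
    v i = ∑' k, f k * v (i + k) := by
  have ha' : Tendsto (fun j => a j - i) atTop atTop := (tendsto_sub_atTop_nat i).comp ha
  have hconv := tendsto_sum_range_mul_sub (v := fun k => v (i + k)) hf
    (fun n => abs_le.mpr ⟨by linarith [(hu n).1], (hu n).2⟩) ha'
    fun k => by simpa only [Nat.sub_sub] using hv (i + k)
  have hlim := (hb.comp ha').add hconv
  rw [zero_add] at hlim
  exact tendsto_nhds_unique (hv i) (hlim.congr fun j => (hrec _).symm)

theorem shift_limit_eq_of_sign (hf0 : ∀ k, 0 ≤ f k) (hf1 : HasSum f 1)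
    (hu : ∀ n, u n ∈ Set.Icc (0 : ℝ) 1) (hb : Tendsto b atTop (𝓝 0))
    (hrec : ∀ n, u n = b n + ∑ k ∈ range (n + 1), f k * u (n - k))
    {p q : ℕ} (hpq : p.Coprime q) (hp : 1 < p) (hq : 1 < q) (hfp : 0 < f p) (hfq : 0 < f q)
    {a : ℕ → ℕ} {v : ℕ → ℝ} (ha : Tendsto a atTop atTop)
    (hv : ∀ i, Tendsto (fun j => u (a j - i)) atTop (𝓝 (v i)))
    {s : ℝ} (hs : s ≠ 0) (hsign : ∀ i, 0 ≤ s * (v i - v 0)) (k : ℕ) :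
    v (p * q + k) = v 0 := by
  have hvI : ∀ i, v i ∈ Set.Icc (0 : ℝ) 1 := fun i =>
    isClosed_Icc.mem_of_tendsto (hv i) (Eventually.of_forall fun j => hu _)
  have hfv : ∀ i, Summable fun k => f k * v (i + k) := fun i =>
    hf1.summable.of_nonneg_of_le (fun k => mul_nonneg (hf0 k) (hvI _).1)
      fun k => mul_le_of_le_one_right (hf0 k) (hvI _).2
  set w : ℕ → ℝ := fun i => s * (v i - v 0) with hw
  have hw_eq : ∀ i, (fun k => f k * w (i + k)) = fun k => s * (f k * v (i + k)) - s * v 0 * f k :=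
    fun i => funext fun k => by simp only [hw]; ring
  have hw_summable : ∀ i, Summable fun k => f k * w (i + k) := fun i => by
    rw [hw_eq]; exact ((hfv i).mul_left s).sub (hf1.summable.mul_left _)
  have hw_harm : ∀ i, w i = ∑' k, f k * w (i + k) := fun i => by
    rw [hw_eq, Summable.tsum_sub ((hfv i).mul_left s) (hf1.summable.mul_left _), tsum_mul_left,
      tsum_mul_left, ← shift_limit_eq_tsum hf1.summable hu hb hrec ha hv i, hf1.tsum_eq]
    ring
  have hmem : p * q + k ∈ AddSubmonoid.closure {k | 0 < f k} :=
    AddSubmonoid.closure_mono (by simp [Set.insert_subset_iff, hfp, hfq])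
      (mul_add_mem_closure_pair hpq hp hq k)
  have := harmonic_eq_zero_of_mem_closure hf0 hsign hw_summable hw_harm hmem
    (show w 0 = 0 by simp [hw])
  simpa [hw, hs, sub_eq_zero] using this

theorem mul_eq_one_of_extremal_mapClusterPt (hf0 : ∀ k, 0 ≤ f k) (hf1 : HasSum f 1)
    (hu : ∀ n, u n ∈ Set.Icc (0 : ℝ) 1) (hb : Tendsto b atTop (𝓝 0))
    (hH : Tendsto H atTop (𝓝 0)) (hr : HasSum r m)
    (hrec : ∀ n, u n = b n + ∑ k ∈ range (n + 1), f k * u (n - k))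
    (hmass : ∀ n, H n + ∑ k ∈ range (n + 1), r k * u (n - k) = 1)
    {p q : ℕ} (hpq : p.Coprime q) (hp : 1 < p) (hq : 1 < q) (hfp : 0 < f p) (hfq : 0 < f q)
    {c s : ℝ} (hs : s ≠ 0) (hc : MapClusterPt c atTop u)
    (hext : ∀ x, MapClusterPt x atTop u → 0 ≤ s * (x - c)) :
    c * m = 1 := by
  obtain ⟨ψ, hψ, hcψ⟩ := hc.tendsto_subseq
  obtain ⟨a, ha, v, hv0, hv⟩ := exists_tendsto_shift hu hψ.tendsto_atTop hcψ
  have hconst : ∀ k, v (p * q + k) = c := fun k => hv0 ▸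
    shift_limit_eq_of_sign hf0 hf1 hu hb hrec hpq hp hq hfp hfq ha hv hs (fun i => hv0 ▸
      hext _ ((hv i).mapClusterPt.of_comp ((tendsto_sub_atTop_nat i).comp ha))) k
  have ha' : Tendsto (fun j => a j - p * q) atTop atTop := (tendsto_sub_atTop_nat _).comp ha
  have hconv := tendsto_sum_range_mul_sub (v := fun _ => c) hr.summable
    (fun n => abs_le.mpr ⟨by linarith [(hu n).1], (hu n).2⟩) ha'
    fun k => by simpa only [Nat.sub_sub, hconst] using hv (p * q + k)
  have hlim := (hH.comp ha').add hconv
  rw [zero_add, tsum_mul_right, hr.tsum_eq] at hlim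
  rw [mul_comm]
  exact tendsto_nhds_unique hlim (tendsto_const_nhds.congr fun j => (hmass _).symm)

theorem tendsto_inv_of_renewal (hf0 : ∀ k, 0 ≤ f k) (hf1 : HasSum f 1)
    (hu : ∀ n, u n ∈ Set.Icc (0 : ℝ) 1) (hb : Tendsto b atTop (𝓝 0))
    (hH : Tendsto H atTop (𝓝 0)) (hr : HasSum r m)
    (hrec : ∀ n, u n = b n + ∑ k ∈ range (n + 1), f k * u (n - k))
    (hmass : ∀ n, H n + ∑ k ∈ range (n + 1), r k * u (n - k) = 1)
    {p q : ℕ} (hpq : p.Coprime q) (hp : 1 < p) (hq : 1 < q) (hfp : 0 < f p) (hfq : 0 < f q) :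
    Tendsto u atTop (𝓝 m⁻¹) := by
  have hle : IsBoundedUnder (· ≤ ·) atTop u := isBoundedUnder_of ⟨1, fun n => (hu n).2⟩
  have hge : IsBoundedUnder (· ≥ ·) atTop u := isBoundedUnder_of ⟨0, fun n => (hu n).1⟩
  have key := @mul_eq_one_of_extremal_mapClusterPt f b u H r m hf0 hf1 hu hb hH hr hrec hmass
    p q hpq hp hq hfp hfq
  have hsup : limsup u atTop * m = 1 := key (s := -1) (by norm_num)
    (MapClusterPt.limsup hge.isCoboundedUnder_le hle) fun x hx => by
      linarith [hx.le_limsup hle]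
  have hinf : liminf u atTop * m = 1 := key (s := 1) one_ne_zero
    (MapClusterPt.liminf hle.isCoboundedUnder_ge hge) fun x hx => by
      linarith [hx.liminf_le hge]
  exact tendsto_of_liminf_eq_limsup (eq_inv_of_mul_eq_one_left hinf)
    (eq_inv_of_mul_eq_one_left hsup) hle hge

end Renewal

theorem ENNReal.toReal_add_sum_mul {s : Finset ℕ} {a : ℝ≥0∞} {g v : ℕ → ℝ≥0∞} (ha : a ≠ ⊤)
    (hg : ∀ k, g k ≠ ⊤) (hv : ∀ k, v k ≠ ⊤) :
    (a + ∑ k ∈ s, g k * v k).toReal = a.toReal + ∑ k ∈ s, (g k).toReal * (v k).toReal := by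
  rw [ENNReal.toReal_add ha (ENNReal.sum_ne_top.mpr fun k _ => ENNReal.mul_ne_top (hg k) (hv k)),
    ENNReal.toReal_sum fun k _ => ENNReal.mul_ne_top (hg k) (hv k)]
  exact congrArg _ (sum_congr rfl fun k _ => ENNReal.toReal_mul)

theorem ENNReal.tendsto_inv_of_renewal {f b u H r : ℕ → ℝ≥0∞} (hf : ∑' k, f k = 1)
    (hu : ∀ n, u n ≤ 1) (hb : Tendsto b atTop (𝓝 0)) (hH : Tendsto H atTop (𝓝 0))
    (hr : ∑' k, r k ≠ ⊤) (hrec : ∀ n, u n = b n + ∑ k ∈ range (n + 1), f k * u (n - k))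
    (hmass : ∀ n, H n + ∑ k ∈ range (n + 1), r k * u (n - k) = 1)
    {p q : ℕ} (hpq : p.Coprime q) (hp : 1 < p) (hq : 1 < q) (hfp : 0 < f p) (hfq : 0 < f q) :
    Tendsto u atTop (𝓝 (∑' k, r k)⁻¹) := by
  have hf_top : ∀ k, f k ≠ ⊤ := fun k =>
    ne_top_of_le_ne_top ENNReal.one_ne_top (hf ▸ ENNReal.le_tsum k)
  have hu_top : ∀ n, u n ≠ ⊤ := fun n => ne_top_of_le_ne_top ENNReal.one_ne_top (hu n)
  have hb_top : ∀ n, b n ≠ ⊤ := fun n =>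
    ne_top_of_le_ne_top (hu_top n) ((hrec n).symm ▸ le_self_add)
  have hH_top : ∀ n, H n ≠ ⊤ := fun n =>
    ne_top_of_le_ne_top ENNReal.one_ne_top ((hmass n) ▸ le_self_add)
  have hr_top : ∀ k, r k ≠ ⊤ := fun k => ne_top_of_le_ne_top hr (ENNReal.le_tsum k)
  have hr0 : ∑' k, r k ≠ 0 := by
    intro h
    have hH1 : ∀ n, H n = 1 := fun n => by
      simpa [ENNReal.tsum_eq_zero.mp h] using hmass n
    rw [show H = fun _ => 1 from funext hH1] at hH
    exact one_ne_zero (tendsto_nhds_unique tendsto_const_nhds hH)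
  have hreal := _root_.tendsto_inv_of_renewal (f := fun k => (f k).toReal)
    (b := fun n => (b n).toReal) (u := fun n => (u n).toReal) (H := fun n => (H n).toReal)
    (r := fun k => (r k).toReal)
    (fun k => ENNReal.toReal_nonneg)
    (by
      have h := ENNReal.hasSum_toReal (hf ▸ ENNReal.one_ne_top)
      rwa [← ENNReal.tsum_toReal_eq hf_top, hf, ENNReal.toReal_one] at h)
    (fun n => ⟨ENNReal.toReal_nonneg,
      ENNReal.toReal_le_of_le_ofReal zero_le_one (by simpa using hu n)⟩)
    (by simpa only [ENNReal.toReal_zero, Function.comp_def] using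
      (ENNReal.tendsto_toReal ENNReal.zero_ne_top).comp hb)
    (by simpa only [ENNReal.toReal_zero, Function.comp_def] using
      (ENNReal.tendsto_toReal ENNReal.zero_ne_top).comp hH)
    (by simpa [← ENNReal.tsum_toReal_eq hr_top] using ENNReal.hasSum_toReal hr)
    (fun n => by rw [hrec n, ENNReal.toReal_add_sum_mul (hb_top n) hf_top fun k => hu_top _])
    (fun n => by rw [← ENNReal.toReal_add_sum_mul (hH_top n) hr_top fun k => hu_top _, hmass n,
      ENNReal.toReal_one])
    hpq hp hq (ENNReal.toReal_pos hfp.ne' (hf_top p)) (ENNReal.toReal_pos hfq.ne' (hf_top q))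
  rw [← ENNReal.tendsto_toReal_iff hu_top (ENNReal.inv_ne_top.mpr hr0), ENNReal.toReal_inv]
  exact hreal

theorem ENNReal.tendsto_sum_range_mul_sub {g u : ℕ → ℝ≥0∞} {L : ℝ≥0∞} (hg : ∑' k, g k ≠ ⊤)
    (hu : ∀ n, u n ≤ 1) (hL : Tendsto u atTop (𝓝 L)) :
    Tendsto (fun n => ∑ k ∈ range (n + 1), g k * u (n - k)) atTop (𝓝 ((∑' k, g k) * L)) := by
  have hg_top : ∀ k, g k ≠ ⊤ := fun k => ne_top_of_le_ne_top hg (ENNReal.le_tsum k)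
  have hu_top : ∀ n, u n ≠ ⊤ := fun n => ne_top_of_le_ne_top ENNReal.one_ne_top (hu n)
  have hL_top : L ≠ ⊤ := ne_top_of_le_ne_top ENNReal.one_ne_top (le_of_tendsto' hL hu)
  have hreal := _root_.tendsto_sum_range_mul_sub (g := fun k => (g k).toReal)
    (u := fun n => (u n).toReal) (v := fun _ => L.toReal) (C := 1) (ENNReal.summable_toReal hg)
    (fun n => by
      rw [abs_of_nonneg ENNReal.toReal_nonneg]
      exact ENNReal.toReal_le_of_le_ofReal zero_le_one (by simpa using hu n))
    tendsto_id fun k => (ENNReal.tendsto_toReal hL_top).comp (hL.comp (tendsto_sub_atTop_nat k))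
  rw [← ENNReal.tendsto_toReal_iff (fun n => ENNReal.sum_ne_top.mpr fun k _ =>
    ENNReal.mul_ne_top (hg_top k) (hu_top _)) (ENNReal.mul_ne_top hg hL_top)]
  simpa [ENNReal.toReal_sum, ENNReal.toReal_mul, ENNReal.tsum_toReal_eq hg_top, tsum_mul_right,
    ENNReal.mul_ne_top, hg_top, hu_top] using hreal

theorem ENNReal.tsum_option {γ : Type*} (f : Option γ → ℝ≥0∞) :
    ∑' x, f x = f none + ∑' s, f (some s) := by
  rw [← (Equiv.optionEquivSumPUnit.{0} γ).symm.tsum_eq, ENNReal.summable.tsum_sum ENNReal.summable,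
    add_comm]
  simp

theorem ENNReal.sum_range_sum_range_mul_le (f g : ℕ → ℝ≥0∞) (N : ℕ) :
    ∑ n ∈ range N, ∑ k ∈ range (n + 1), f k * g (n - k) ≤ (∑ k ∈ range N, f k) * ∑' n, g n := by
  rw [sum_range_diag_flip N fun k l => f k * g l, sum_mul]
  refine sum_le_sum fun k _ => ?_
  rw [← mul_sum]
  gcongr
  exact ENNReal.sum_le_tsum _

theorem ENNReal.tsum_eq_tsum_succ_mul_of_add_eq {a c : ℕ → ℝ≥0∞} (hc : ∑' t, c t ≠ ⊤)
    (h0 : a 0 = ∑' t, c t) (hsucc : ∀ t, a (t + 1) + c t = a t) :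
    ∑' t, a t = ∑' t : ℕ, ((t : ℝ≥0∞) + 1) * c t := by
  have htail : ∀ t, a t = ∑' i, if t ≤ i then c i else 0 := by
    intro t
    induction t with
    | zero => simpa using h0
    | succ t ih =>
      have hsplit : ∀ i, (if t ≤ i then c i else 0)
          = (if i = t then c t else 0) + if t + 1 ≤ i then c i else 0 := fun i => by
        rcases lt_trichotomy i t with h | rfl | h
        · simp [h.ne, h.not_ge, show ¬ t + 1 ≤ i by omega]
        · simp
        · simp [h.ne', h.le, show t + 1 ≤ i by omega]
      rw [← hsucc t, tsum_congr hsplit, ENNReal.tsum_add, tsum_ite_eq, add_comm] at ih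
      exact (ENNReal.add_right_inj (ne_top_of_le_ne_top hc (ENNReal.le_tsum t))).mp ih
  rw [tsum_congr htail, ENNReal.tsum_comm]
  refine tsum_congr fun i => ?_
  rw [tsum_eq_sum (s := range (i + 1)) fun t ht => if_neg (by simpa [Nat.lt_succ_iff] using ht),
    sum_congr rfl fun t ht => if_pos (Nat.lt_succ_iff.mp (mem_range.mp ht)), sum_const,
    card_range, nsmul_eq_mul]
  push_cast
  rfl

section FirstPassage

variable {σ : Type} (M : σ → σ → ℝ≥0∞) (α : σ)

def marginal (μ : σ → ℝ≥0∞) (n : ℕ) (y : σ) : ℝ≥0∞ :=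
  ∑' x, μ x * stepProb M n x y

variable {M α} {μ : σ → ℝ≥0∞}

theorem marginal_zero (y : σ) : marginal M μ 0 y = μ y := by
  simp [marginal, stepProb]

theorem marginal_succ (n : ℕ) (y : σ) :
    marginal M μ (n + 1) y = ∑' x, marginal M μ n x * M x y := by
  simp only [marginal, stepProb, ← ENNReal.tsum_mul_left, ← ENNReal.tsum_mul_right, mul_assoc]
  exact ENNReal.tsum_comm

theorem tsum_tsum_mul_of_tsum_eq_one (hM : ∀ x, ∑' y, M x y = 1) (g : σ → ℝ≥0∞) :
    ∑' y, ∑' x, g x * M x y = ∑' x, g x := by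
  rw [ENNReal.tsum_comm]
  simp [ENNReal.tsum_mul_left, hM]

theorem tsum_marginal (hM : ∀ x, ∑' y, M x y = 1) (hμ : ∑' x, μ x = 1) (n : ℕ) :
    ∑' y, marginal M μ n y = 1 := by
  induction n with
  | zero => simpa [marginal_zero] using hμ
  | succ n ih => simp only [marginal_succ]; rw [tsum_tsum_mul_of_tsum_eq_one hM, ih]

theorem tsum_add_sum_mul_mul (a : σ → ℝ≥0∞) (g : ℕ → σ → ℝ≥0∞) (c : ℕ → ℝ≥0∞) (s : Finset ℕ)
    (y : σ) :
    ∑' x, (a x + ∑ k ∈ s, g k x * c k) * M x y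
      = ∑' x, a x * M x y + ∑ k ∈ s, (∑' x, g k x * M x y) * c k := by
  simp only [add_mul, sum_mul, ENNReal.tsum_add]
  rw [Summable.tsum_finsetSum fun _ _ => ENNReal.summable]
  simp only [← ENNReal.tsum_mul_right, mul_right_comm]

variable (M α) [DecidableEq σ]

/-- Taboo probabilities: the mass at `y` at time `n` of the paths started from `μ` that avoid `α`
at the times `1, …, n` (but not necessarily at time `0`). -/
def taboo (μ : σ → ℝ≥0∞) : ℕ → σ → ℝ≥0∞
  | 0 => μ
  | n + 1 => fun y => if y = α then 0 else ∑' x, taboo μ n x * M x y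

def firstEntry (μ : σ → ℝ≥0∞) : ℕ → ℝ≥0∞
  | 0 => 0
  | n + 1 => ∑' x, taboo M α μ n x * M x α

def avoidProb (μ : σ → ℝ≥0∞) (n : ℕ) : ℝ≥0∞ :=
  ∑' y, taboo M α μ n y

/-- The expected number of visits to `y` before the first return to `α`, starting from `α`. -/
def excursionMeasure (y : σ) : ℝ≥0∞ :=
  ∑' k, taboo M α (Pi.single α 1) k y

def meanReturnTime : ℝ≥0∞ :=
  ∑' k, avoidProb M α (Pi.single α 1) k

variable {M α}

theorem taboo_zero : taboo M α μ 0 = μ := rfl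

theorem taboo_succ (n : ℕ) (y : σ) :
    taboo M α μ (n + 1) y = if y = α then 0 else ∑' x, taboo M α μ n x * M x y := rfl

theorem taboo_succ_self (n : ℕ) : taboo M α μ (n + 1) α = 0 := if_pos rfl

theorem taboo_succ_of_ne {y : σ} (hy : y ≠ α) (n : ℕ) :
    taboo M α μ (n + 1) y = ∑' x, taboo M α μ n x * M x y := if_neg hy

theorem firstEntry_zero : firstEntry M α μ 0 = 0 := rfl

theorem firstEntry_succ (n : ℕ) :
    firstEntry M α μ (n + 1) = ∑' x, taboo M α μ n x * M x α := rfl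

theorem avoidProb_succ_add_firstEntry (hM : ∀ x, ∑' y, M x y = 1) (n : ℕ) :
    avoidProb M α μ (n + 1) + firstEntry M α μ (n + 1) = avoidProb M α μ n := by
  unfold avoidProb
  rw [← tsum_tsum_mul_of_tsum_eq_one hM (taboo M α μ n),
    ENNReal.summable.tsum_eq_add_tsum_ite' (f := fun y => ∑' x, taboo M α μ n x * M x y) α,
    add_comm]
  rfl

/-- Last-exit decomposition at `α`. -/
theorem marginal_eq_taboo_add (hμα : μ α = 0) (n : ℕ) (y : σ) :
    marginal M μ n y = taboo M α μ n y
      + ∑ k ∈ range (n + 1), taboo M α (Pi.single α 1) k y * marginal M μ (n - k) α := by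
  induction n generalizing y with
  | zero => by_cases hy : y = α <;> simp [marginal_zero, taboo_zero, hy, hμα]
  | succ n ih =>
    by_cases hy : y = α
    · subst hy
      rw [sum_range_succ', taboo_succ_self]
      simp [taboo_succ_self, taboo_zero]
    · rw [marginal_succ, tsum_congr fun x => by rw [ih x], tsum_add_sum_mul_mul,
        sum_range_succ' _ (n + 1)]
      simp [taboo_succ_of_ne hy, taboo_zero, Pi.single_eq_of_ne hy]

theorem marginal_self_eq (hμα : μ α = 0) (n : ℕ) :
    marginal M μ n α = firstEntry M α μ n
      + ∑ k ∈ range (n + 1), firstEntry M α (Pi.single α 1) k * marginal M μ (n - k) α := by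
  cases n with
  | zero => simp [marginal_zero, hμα, firstEntry_zero]
  | succ n =>
    rw [marginal_succ, tsum_congr fun x => by rw [marginal_eq_taboo_add hμα n x],
      tsum_add_sum_mul_mul, sum_range_succ' _ (n + 1)]
    simp [firstEntry_zero, firstEntry_succ]

theorem avoidProb_add_sum_mul (hM : ∀ x, ∑' y, M x y = 1) (hμ : ∑' x, μ x = 1) (hμα : μ α = 0)
    (n : ℕ) :
    avoidProb M α μ n
      + ∑ k ∈ range (n + 1), avoidProb M α (Pi.single α 1) k * marginal M μ (n - k) α = 1 := by
  refine Eq.trans ?_ (tsum_marginal hM hμ n)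
  rw [tsum_congr (marginal_eq_taboo_add hμα n), ENNReal.tsum_add,
    Summable.tsum_finsetSum fun _ _ => ENNReal.summable]
  simp only [avoidProb, ENNReal.tsum_mul_right]

theorem tsum_excursionMeasure : ∑' y, excursionMeasure M α y = meanReturnTime M α :=
  ENNReal.tsum_comm

theorem excursionMeasure_stationary (hf : ∑' k, firstEntry M α (Pi.single α 1) k = 1) (y : σ) :
    ∑' x, excursionMeasure M α x * M x y = excursionMeasure M α y := by
  simp only [excursionMeasure, ← ENNReal.tsum_mul_right]
  rw [ENNReal.tsum_comm, tsum_eq_zero_add' ENNReal.summable (f := fun k => taboo M α _ k y)]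
  by_cases hy : y = α
  · subst hy
    rw [tsum_eq_zero_add' ENNReal.summable, firstEntry_zero, zero_add] at hf
    change ∑' k, firstEntry M y (Pi.single y 1) (k + 1) = _
    simp [hf, taboo_succ_self, taboo_zero]
  · simp [taboo_succ_of_ne hy, taboo_zero, Pi.single_eq_of_ne hy]

theorem tsum_firstEntry_of_meanReturnTime_ne_top (hM : ∀ x, ∑' y, M x y = 1)
    (hm : meanReturnTime M α ≠ ⊤) : ∑' k, firstEntry M α (Pi.single α 1) k = 1 := by
  have hpartial : ∀ n, avoidProb M α (Pi.single α 1) n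
      + ∑ k ∈ range (n + 1), firstEntry M α (Pi.single α 1) k = 1 := by
    intro n
    induction n with
    | zero => simp [avoidProb, taboo_zero, firstEntry_zero]
    | succ n ih =>
      rw [sum_range_succ, ← add_assoc, add_right_comm, avoidProb_succ_add_firstEntry hM, ih]
  have hlim := (ENNReal.tendsto_atTop_zero_of_tsum_ne_top hm).add
    ((ENNReal.tendsto_nat_tsum (firstEntry M α (Pi.single α 1))).comp (tendsto_add_atTop_nat 1))
  rw [zero_add] at hlim
  exact tendsto_nhds_unique hlim (tendsto_const_nhds.congr fun n => (hpartial n).symm)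

theorem exists_stationary_tendsto_marginal (hM : ∀ x, ∑' y, M x y = 1) (hμ : ∑' x, μ x = 1)
    (hμα : μ α = 0) (hm : meanReturnTime M α ≠ ⊤)
    (hH : Tendsto (avoidProb M α μ) atTop (𝓝 0)) {p q : ℕ} (hpq : p.Coprime q) (hp : 1 < p)
    (hq : 1 < q) (hfp : 0 < firstEntry M α (Pi.single α 1) p)
    (hfq : 0 < firstEntry M α (Pi.single α 1) q) :
    ∃ ρ : σ → ℝ≥0∞, ∑' x, ρ x = 1 ∧ (∀ y, ρ y = ∑' x, ρ x * M x y) ∧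
      ∀ y, Tendsto (fun n => marginal M μ n y) atTop (𝓝 (ρ y)) := by
  have hm0 : meanReturnTime M α ≠ 0 := by
    refine (zero_lt_one.trans_le ((le_of_eq ?_).trans (ENNReal.le_tsum 0))).ne'
    simp [avoidProb, taboo_zero]
  have hf := tsum_firstEntry_of_meanReturnTime_ne_top hM hm
  have hmarg : ∀ n y, marginal M μ n y ≤ 1 := fun n y =>
    tsum_marginal hM hμ n ▸ ENNReal.le_tsum y
  have hb : Tendsto (firstEntry M α μ) atTop (𝓝 0) := by
    rw [← tendsto_add_atTop_iff_nat 1]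
    exact tendsto_of_tendsto_of_tendsto_of_le_of_le tendsto_const_nhds hH (fun n => zero_le)
      fun n => le_add_self.trans (avoidProb_succ_add_firstEntry hM n).le
  have hu : Tendsto (fun n => marginal M μ n α) atTop (𝓝 (meanReturnTime M α)⁻¹) :=
    ENNReal.tendsto_inv_of_renewal hf (fun n => hmarg n α) hb hH hm (marginal_self_eq hμα)
      (avoidProb_add_sum_mul hM hμ hμα) hpq hp hq hfp hfq
  refine ⟨fun y => excursionMeasure M α y * (meanReturnTime M α)⁻¹, ?_, fun y => ?_, fun y => ?_⟩
  · rw [ENNReal.tsum_mul_right, tsum_excursionMeasure, ENNReal.mul_inv_cancel hm0 hm]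
  · dsimp only
    rw [← excursionMeasure_stationary hf y, ← ENNReal.tsum_mul_right]
    exact tsum_congr fun x => mul_right_comm _ _ _
  · have htaboo : Tendsto (fun n => taboo M α μ n y) atTop (𝓝 0) :=
      tendsto_of_tendsto_of_tendsto_of_le_of_le tendsto_const_nhds hH (fun n => zero_le)
        fun n => ENNReal.le_tsum y
    have hconv := ENNReal.tendsto_sum_range_mul_sub (g := fun k => taboo M α (Pi.single α 1) k y)
      (ne_top_of_le_ne_top hm (ENNReal.tsum_le_tsum fun k => ENNReal.le_tsum y))
      (fun n => hmarg n α) hu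
    have hlim := htaboo.add hconv
    rw [zero_add] at hlim
    exact hlim.congr fun n => (marginal_eq_taboo_add hμα n y).symm

end FirstPassage

/-- When an episode ends after `t + 1` steps with probability `c t` and is followed by a new one
with probability `θ`, `restartSeq c θ j` is the probability that an episode starts at time `j`. -/
def restartSeq (c : ℕ → ℝ≥0∞) (θ : ℝ≥0∞) : ℕ → ℝ≥0∞
  | 0 => 1
  | j + 1 => θ * ∑ i : Fin (j + 1), restartSeq c θ i * c (j - i)

section RestartSeq

variable {c : ℕ → ℝ≥0∞} {θ : ℝ≥0∞}

theorem restartSeq_zero : restartSeq c θ 0 = 1 := by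
  rw [restartSeq]

theorem restartSeq_succ (j : ℕ) :
    restartSeq c θ (j + 1) = θ * ∑ i ∈ range (j + 1), restartSeq c θ i * c (j - i) := by
  rw [restartSeq, Fin.sum_univ_eq_sum_range (fun i => restartSeq c θ i * c (j - i))]

theorem sum_range_restartSeq_le (hc : ∑' t, c t ≤ 1) (hθ : θ < 1) (n : ℕ) :
    ∑ j ∈ range n, restartSeq c θ j ≤ (1 - θ)⁻¹ := by
  have hθ' : 1 - θ ≠ 0 := (tsub_pos_of_lt hθ).ne'
  induction n with
  | zero => simp
  | succ n ih =>
    have hconv := (ENNReal.sum_range_sum_range_mul_le (restartSeq c θ) c n).trans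
      (mul_le_of_le_one_right' hc)
    calc ∑ j ∈ range (n + 1), restartSeq c θ j
        = θ * ∑ j ∈ range n, ∑ i ∈ range (j + 1), restartSeq c θ i * c (j - i) + 1 := by
          rw [sum_range_succ', restartSeq_zero, mul_sum]
          simp only [restartSeq_succ]
      _ ≤ θ * (1 - θ)⁻¹ + 1 := by gcongr; exact hconv.trans ih
      _ = θ * (1 - θ)⁻¹ + (1 - θ) * (1 - θ)⁻¹ := by
          rw [ENNReal.mul_inv_cancel hθ' (tsub_le_self.trans_lt ENNReal.one_lt_top).ne]
      _ = (1 - θ)⁻¹ := by rw [← add_mul, add_tsub_cancel_of_le hθ.le, one_mul]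

theorem tsum_restartSeq_le (hc : ∑' t, c t ≤ 1) (hθ : θ < 1) :
    ∑' j, restartSeq c θ j ≤ (1 - θ)⁻¹ :=
  ENNReal.tsum_le_of_sum_range_le (sum_range_restartSeq_le hc hθ)

end RestartSeq

section Episode

variable {S : Type} {M : S → S → ℝ≥0∞} {T : Set S} {s : S}

theorem tsum_epiStep_succ_add_termHit (hM : ∀ x, ∑' y, M x y = 1) (t : ℕ) :
    ∑' v, epiStep M T s (t + 1) v + termHit M T s t = ∑' v, epiStep M T s t v := by
  have h : ∀ v u, (if v ∈ T then 0 else epiStep M T s t v * M v u)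
      = (if v ∈ T then 0 else epiStep M T s t v) * M v u := fun v u => by split_ifs <;> simp
  simp only [epiStep, h, tsum_tsum_mul_of_tsum_eq_one hM, termHit, ← ENNReal.tsum_add]
  exact tsum_congr fun v => by split_ifs <;> simp

theorem tsum_tsum_epiStep (hM : ∀ x, ∑' y, M x y = 1) (hc : ∑' t, termHit M T s t = 1) :
    ∑' t, ∑' v, epiStep M T s t v = meanEpiLen M T s :=
  ENNReal.tsum_eq_tsum_succ_mul_of_add_eq (a := fun t => ∑' v, epiStep M T s t v)
    (hc ▸ ENNReal.one_ne_top)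
    (by rw [hc]; exact hM s) (tsum_epiStep_succ_add_termHit hM)

end Episode

section Perturbed

variable {S : Type} {M : S → S → ℝ≥0∞} {T : Set S} {sT : S} {ε : ℝ≥0∞}

theorem tsum_perturbM (hM : ∀ s, ∑' s', M s s' = 1) (hε : ε ≤ 1) (x : Option S) :
    ∑' y, perturbM M T sT ε x y = 1 := by
  rw [ENNReal.tsum_option]
  cases x with
  | none => simpa [perturbM] using hM sT
  | some s =>
    by_cases hs : s ∈ T
    · simp [perturbM, hs, ENNReal.tsum_mul_left, hM, add_tsub_cancel_of_le hε]
    · simp [perturbM, hs, hM]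

theorem tsum_epiStep_mul_perturbM (hT : ∀ s ∈ T, M s = M sT) (t : ℕ) (v : S) :
    ∑' s, epiStep M T sT t s * perturbM M T sT ε (some s) (some v)
      = epiStep M T sT (t + 1) v + (1 - ε) * termHit M T sT t * M sT v := by
  have hsplit : ∀ s, epiStep M T sT t s * perturbM M T sT ε (some s) (some v)
      = (if s ∈ T then 0 else epiStep M T sT t s * M s v)
        + (1 - ε) * M sT v * (if s ∈ T then epiStep M T sT t s else 0) := fun s => by
    by_cases hs : s ∈ T
    · simp only [perturbM, hs, hT s hs, if_true, zero_add, mul_comm, mul_left_comm]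
    · simp [perturbM, hs]
  rw [tsum_congr hsplit, ENNReal.tsum_add, ENNReal.tsum_mul_left, mul_right_comm]
  rfl

section

variable [DecidableEq S]

theorem taboo_perturbM_single_some (hT : ∀ s ∈ T, M s = M sT) (k : ℕ) (v : S) :
    taboo (perturbM M T sT ε) none (Pi.single none 1) (k + 1) (some v)
      = ∑ j ∈ range (k + 1),
          restartSeq (termHit M T sT) (1 - ε) j * epiStep M T sT (k - j) v := by
  induction k generalizing v with
  | zero =>
    rw [taboo_succ_of_ne (Option.some_ne_none v), ENNReal.tsum_option]
    simp [taboo_zero, perturbM, restartSeq_zero, epiStep]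
  | succ k ih =>
    rw [taboo_succ_of_ne (Option.some_ne_none v), ENNReal.tsum_option, taboo_succ_self, zero_mul,
      zero_add, tsum_congr fun s => by rw [ih, sum_mul],
      Summable.tsum_finsetSum fun _ _ => ENNReal.summable]
    simp_rw [mul_assoc, ENNReal.tsum_mul_left, tsum_epiStep_mul_perturbM hT, mul_add,
      sum_add_distrib]
    rw [sum_range_succ _ (k + 1), Nat.sub_self, restartSeq_succ, mul_sum, sum_mul]
    congr 1
    · exact sum_congr rfl fun j hj => by
        rw [Nat.sub_add_comm (Nat.lt_succ_iff.mp (mem_range.mp hj))]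
    · exact sum_congr rfl fun j _ => by simp only [epiStep]; ring

theorem avoidProb_perturbM_single_succ (hT : ∀ s ∈ T, M s = M sT) (k : ℕ) :
    avoidProb (perturbM M T sT ε) none (Pi.single none 1) (k + 1)
      = ∑ j ∈ range (k + 1),
          restartSeq (termHit M T sT) (1 - ε) j * ∑' v, epiStep M T sT (k - j) v := by
  rw [avoidProb, ENNReal.tsum_option, taboo_succ_self, zero_add,
    tsum_congr fun v => taboo_perturbM_single_some hT k v,
    Summable.tsum_finsetSum fun _ _ => ENNReal.summable]
  simp_rw [ENNReal.tsum_mul_left]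

theorem firstEntry_perturbM_single (hT : ∀ s ∈ T, M s = M sT) (k : ℕ) :
    firstEntry (perturbM M T sT ε) none (Pi.single none 1) (k + 2)
      = ε * ∑ j ∈ range (k + 1),
          restartSeq (termHit M T sT) (1 - ε) j * termHit M T sT (k - j) := by
  have hsplit : ∀ s, taboo (perturbM M T sT ε) none (Pi.single none 1) (k + 1) (some s)
      * perturbM M T sT ε (some s) none
      = ε * ∑ j ∈ range (k + 1), restartSeq (termHit M T sT) (1 - ε) j
          * (if s ∈ T then epiStep M T sT (k - j) s else 0) := fun s => by
    rw [taboo_perturbM_single_some hT]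
    by_cases hs : s ∈ T <;> simp [perturbM, hs, mul_comm]
  rw [firstEntry_succ, ENNReal.tsum_option, taboo_succ_self, zero_mul, zero_add,
    tsum_congr hsplit, ENNReal.tsum_mul_left, Summable.tsum_finsetSum fun _ _ => ENNReal.summable]
  simp_rw [ENNReal.tsum_mul_left]
  rfl

theorem taboo_perturbM_elim (hT : ∀ s ∈ T, M s = M sT) {μ : S → ℝ≥0∞} (hμ : ∑' s, μ s = 1)
    (hμT : ∀ s ∉ T, μ s = 0) (n : ℕ) (y : Option S) :
    taboo (perturbM M T sT ε) none (fun x => Option.elim x 0 μ) (n + 1) y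
      = (1 - ε) * taboo (perturbM M T sT ε) none (Pi.single none 1) (n + 1) y := by
  induction n generalizing y with
  | zero =>
    cases y with
    | none => simp [taboo_succ_self]
    | some v =>
      have hterm : ∀ s, μ s * perturbM M T sT ε (some s) (some v) = μ s * ((1 - ε) * M sT v) :=
        fun s => by
          by_cases hs : s ∈ T
          · simp [perturbM, hs, hT s hs]
          · simp [hμT s hs]
      rw [taboo_succ_of_ne (Option.some_ne_none v), taboo_succ_of_ne (Option.some_ne_none v),
        ENNReal.tsum_option, ENNReal.tsum_option]
      simp only [taboo_zero, Option.elim, zero_mul, zero_add, hterm, ENNReal.tsum_mul_right, hμ,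
        one_mul]
      simp [perturbM]
  | succ n ih =>
    rw [taboo_succ, taboo_succ]
    split_ifs
    · simp
    · simp_rw [ih, mul_assoc, ENNReal.tsum_mul_left]

theorem meanReturnTime_perturbM_le (hM : ∀ s, ∑' s', M s s' = 1) (hT : ∀ s ∈ T, M s = M sT)
    (hc : ∑' t, termHit M T sT t = 1) (hε0 : 0 < ε) (hε1 : ε ≤ 1) :
    meanReturnTime (perturbM M T sT ε) none ≤ 1 + ε⁻¹ * meanEpiLen M T sT := by
  have hw : ∑' j, restartSeq (termHit M T sT) (1 - ε) j ≤ ε⁻¹ := by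
    simpa [ENNReal.sub_sub_cancel ENNReal.one_ne_top hε1] using
      tsum_restartSeq_le hc.le (ENNReal.sub_lt_self ENNReal.one_ne_top one_ne_zero hε0.ne')
  have h0 : avoidProb (perturbM M T sT ε) none (Pi.single none 1) 0 = 1 := by
    simp [avoidProb, taboo_zero]
  rw [meanReturnTime, tsum_eq_zero_add' ENNReal.summable, h0]
  simp_rw [avoidProb_perturbM_single_succ hT]
  gcongr 1 + ?_
  refine ENNReal.tsum_le_of_sum_range_le fun N => ?_
  refine (ENNReal.sum_range_sum_range_mul_le (restartSeq (termHit M T sT) (1 - ε))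
    (fun t => ∑' v, epiStep M T sT t v) N).trans ?_
  rw [tsum_tsum_epiStep hM hc]
  gcongr
  exact (ENNReal.sum_le_tsum _).trans hw

theorem firstEntry_perturbM_pos (hT : ∀ s ∈ T, M s = M sT) (hε0 : 0 < ε) (hε1 : ε < 1) {t : ℕ}
    (ht : 0 < termHit M T sT t) :
    0 < firstEntry (perturbM M T sT ε) none (Pi.single none 1) (t + 2) ∧
      0 < firstEntry (perturbM M T sT ε) none (Pi.single none 1) (2 * t + 3) := by
  have hterm : ∀ k j, j ≤ k → 0 < restartSeq (termHit M T sT) (1 - ε) j * termHit M T sT (k - j) →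
      0 < firstEntry (perturbM M T sT ε) none (Pi.single none 1) (k + 2) := fun k j hj h => by
    rw [firstEntry_perturbM_single hT]
    exact ENNReal.mul_pos hε0.ne' (h.trans_le (single_le_sum
      (f := fun i => restartSeq (termHit M T sT) (1 - ε) i * termHit M T sT (k - i))
      (fun _ _ => zero_le) (mem_range.mpr (Nat.lt_succ_of_le hj)))).ne'
  have hw0 : 0 < restartSeq (termHit M T sT) (1 - ε) 0 * termHit M T sT t := by
    simpa [restartSeq_zero] using ht
  refine ⟨hterm t 0 (Nat.zero_le t) (by simpa using hw0), hterm (2 * t + 1) (t + 1) (by omega) ?_⟩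
  -- a first episode of length `t + 1`, a restart, and a second one of the same length
  have hw1 : 0 < restartSeq (termHit M T sT) (1 - ε) (t + 1) := by
    rw [restartSeq_succ]
    exact ENNReal.mul_pos (tsub_pos_of_lt hε1).ne' (hw0.trans_le (single_le_sum
      (f := fun i => restartSeq (termHit M T sT) (1 - ε) i * termHit M T sT (t - i))
      (fun _ _ => zero_le) (mem_range.mpr t.succ_pos))).ne'
  rw [show 2 * t + 1 - (t + 1) = t by omega]
  exact ENNReal.mul_pos hw1.ne' ht.ne'

theorem tendsto_avoidProb_perturbM_elim (hT : ∀ s ∈ T, M s = M sT)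
    {μ : S → ℝ≥0∞} (hμ : ∑' s, μ s = 1) (hμT : ∀ s ∉ T, μ s = 0)
    (hm : meanReturnTime (perturbM M T sT ε) none ≠ ⊤) :
    Tendsto (avoidProb (perturbM M T sT ε) none fun x => Option.elim x 0 μ) atTop (𝓝 0) := by
  rw [← tendsto_add_atTop_iff_nat 1]
  refine tendsto_of_tendsto_of_tendsto_of_le_of_le tendsto_const_nhds
    ((tendsto_add_atTop_iff_nat 1).mpr (ENNReal.tendsto_atTop_zero_of_tsum_ne_top hm))
    (fun n => zero_le) fun n => ?_
  rw [avoidProb, avoidProb, tsum_congr (taboo_perturbM_elim hT hμ hμT n), ENNReal.tsum_mul_left]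
  exact mul_le_of_le_one_left' tsub_le_self

end

theorem exists_stationary_tendsto_marginal_perturbM (hM : ∀ s, ∑' s', M s s' = 1)
    (hT : ∀ s ∈ T, M s = M sT) {μ : S → ℝ≥0∞} (hμ : ∑' s, μ s = 1) (hμT : ∀ s ∉ T, μ s = 0)
    (hc : ∑' t, termHit M T sT t = 1) (hL : meanEpiLen M T sT ≠ ⊤) (hε0 : 0 < ε) (hε1 : ε < 1) :
    ∃ ρ : Option S → ℝ≥0∞, ∑' x, ρ x = 1 ∧ (∀ y, ρ y = ∑' x, ρ x * perturbM M T sT ε x y) ∧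
      ∀ y, Tendsto (fun n => marginal (perturbM M T sT ε) (fun x => Option.elim x 0 μ) n y)
        atTop (𝓝 (ρ y)) := by
  classical
  obtain ⟨t, ht⟩ : ∃ t, 0 < termHit M T sT t := by
    by_contra! h
    simp [nonpos_iff_eq_zero.mp (h _)] at hc
  have hm : meanReturnTime (perturbM M T sT ε) none ≠ ⊤ :=
    ne_top_of_le_ne_top (ENNReal.add_ne_top.mpr ⟨ENNReal.one_ne_top,
      ENNReal.mul_ne_top (ENNReal.inv_ne_top.mpr hε0.ne') hL⟩)
      (meanReturnTime_perturbM_le hM hT hc hε0 hε1.le)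
  obtain ⟨hp, hq⟩ := firstEntry_perturbM_pos hT hε0 hε1 ht
  have hpq : (t + 2).Coprime (2 * t + 3) := by
    rw [show 2 * t + 3 = (t + 2) + (t + 1) by ring, Nat.coprime_self_add_right,
      show t + 2 = (t + 1) + 1 by ring, Nat.coprime_self_add_left]
    exact Nat.coprime_one_left _
  exact exists_stationary_tendsto_marginal (tsum_perturbM hM hε1.le)
    (by simpa [ENNReal.tsum_option] using hμ) rfl hm (tendsto_avoidProb_perturbM_elim hT hμ hμT hm)
    hpq (by omega) (by omega) hp hq

end Perturbed

section EpisodicLearningProcess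

variable {S A : Type} (E : ELP S A) {π : S → A → ℝ≥0∞}

theorem ELP.tsum_chainOf (hπ : ∀ s, ∑' a, π s a = 1) (s : S) :
    ∑' s', chainOf E.P π s s' = 1 := by
  simp only [chainOf]
  rw [ENNReal.tsum_comm]
  simp [ENNReal.tsum_mul_left, E.P_sum, hπ]

theorem ELP.mem_termSet_of_pos {s : S} (hs : 0 < E.ρ0 s) : s ∈ TermSet E.P E.ρ0 :=
  fun _ hs₀ a a' => E.homog s _ hs hs₀ a a'

theorem ELP.chainOf_eq_of_mem_termSet (hπ : ∀ s, ∑' a, π s a = 1) {sT s : S}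
    (hsT : 0 < E.ρ0 sT) (hs : s ∈ TermSet E.P E.ρ0) : chainOf E.P π s = chainOf E.P π sT := by
  obtain ⟨a₀⟩ : Nonempty A := by
    by_contra h
    simpa [not_nonempty_iff.mp h] using hπ s
  funext v
  simp only [chainOf, hs sT hsT _ a₀, E.mem_termSet_of_pos hsT sT hsT _ a₀, ENNReal.tsum_mul_right,
    hπ]

end EpisodicLearningProcess

theorem stmt_7_general {S A : Type} (E : ELP S A)
    (π : S → A → ℝ≥0∞) (hπ : ∀ s, ∑' a, π s a = 1)
    (ε : ℝ≥0∞) (hε0 : 0 < ε) (hε1 : ε < 1)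
    (sT : S) (hsT : 0 < E.ρ0 sT) :
    ∃ ρp : Option S → ℝ≥0∞, (∑' x, ρp x = 1) ∧
      (∀ y, ρp y = ∑' x, ρp x * perturbM (chainOf E.P π) (TermSet E.P E.ρ0) sT ε x y) ∧
      (∀ y, Tendsto
        (fun t : ℕ => ∑' x : Option S,
          (Option.elim x 0 E.ρ0) *
            stepProb (perturbM (chainOf E.P π) (TermSet E.P E.ρ0) sT ε) t x y)
        atTop (𝓝 (ρp y))) := by
  obtain ⟨hc, hL⟩ := E.epi_fin π hπ sT (E.mem_termSet_of_pos hsT)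
  exact exists_stationary_tendsto_marginal_perturbM (E.tsum_chainOf hπ)
    (fun s hs => E.chainOf_eq_of_mem_termSet hπ hsT hs) E.ρ0_sum
    (fun s hs => by_contra fun h => hs (E.mem_termSet_of_pos (pos_iff_ne_zero.mpr h))) hc hL.ne
    hε0 hε1

/-- In the ε-perturbed model of an episodic learning process, every policy induces an
ergodic chain: the marginal distributions converge to a stationary (limiting)
distribution. -/
theorem stmt_7 {S A : Type} [Countable S] [Countable A] (E : ELP S A)
    (π : S → A → ℝ≥0∞) (hπ : ∀ s, ∑' a, π s a = 1)
    (ε : ℝ≥0∞) (hε0 : 0 < ε) (hε1 : ε < 1)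
    (sT : S) (hsT : 0 < E.ρ0 sT) :
    ∃ ρp : Option S → ℝ≥0∞, (∑' x, ρp x = 1) ∧
      (∀ y, ρp y = ∑' x, ρp x * perturbM (chainOf E.P π) (TermSet E.P E.ρ0) sT ε x y) ∧
      (∀ y, Tendsto
        (fun t : ℕ => ∑' x : Option S,
          (Option.elim x 0 E.ρ0) *
            stepProb (perturbM (chainOf E.P π) (TermSet E.P E.ρ0) sT ε) t x y)
        atTop (𝓝 (ρp y))) :=
  stmt_7_general E π hπ ε hε0 hε1 sT hsT
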